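/- Let b be a connected, canonically compactifiable graph over a finite discrete measure space (X,m). Then the kernel of the Neumann Laplacian L consists exactly of the constant functions, i.e. u ∈ D(L) with Lu = 0 implies u is constant; moreover, for every f ∈ ℓ²(X,m) with ⟨f,1⟩ = 0 there exists a unique u ∈ D(L) with ⟨u,1⟩ = 0 and Lu = f. -/

import Mathlib

open scoped BigOperators

/-- `u` is square-summable with respect to the measure `m`, i.e. `u ∈ ℓ²(X,m)`. -/
def MemL2 {X : Type*} (m : X → ℝ) (u : X → ℝ) : Prop :=
  Summable (fun x => u x ^ 2 * m x)

/-- `u` has finite energy: the sum defining `Q̃(u)` converges. -/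
def FinEnergy {X : Type*} (b : X → X → ℝ) (u : X → ℝ) : Prop :=
  Summable (fun p : X × X => b p.1 p.2 * (u p.1 - u p.2) ^ 2)

/-- The energy `Q(u) = (1/2) Σ_{x,y} b(x,y) (u(x) - u(y))²`. -/
noncomputable def energy {X : Type*} (b : X → X → ℝ) (u : X → ℝ) : ℝ :=
  (1 / 2) * ∑' p : X × X, b p.1 p.2 * (u p.1 - u p.2) ^ 2

/-- The bilinear energy form `Q(u,v) = (1/2) Σ_{x,y} b(x,y)(u(x)-u(y))(v(x)-v(y))`. -/
noncomputable def energyBil {X : Type*} (b : X → X → ℝ) (u v : X → ℝ) : ℝ :=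
  (1 / 2) * ∑' p : X × X, b p.1 p.2 * (u p.1 - u p.2) * (v p.1 - v p.2)

/-- The form domain `D(Q) = ℓ²(X,m) ∩ D̃`. -/
def MemDQ {X : Type*} (b : X → X → ℝ) (m : X → ℝ) (u : X → ℝ) : Prop :=
  MemL2 m u ∧ FinEnergy b u

/-- The form norm `‖u‖_Q = (Q(u) + ‖u‖₂²)^{1/2}`. -/
noncomputable def formNorm {X : Type*} (b : X → X → ℝ) (m : X → ℝ) (u : X → ℝ) : ℝ :=
  Real.sqrt (energy b u + ∑' x, u x ^ 2 * m x)

/-- `b` is a graph over `X`: symmetric, nonnegative, zero on the diagonal,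
with summable rows. -/
structure IsGraph {X : Type*} (b : X → X → ℝ) : Prop where
  symm : ∀ x y, b x y = b y x
  nonneg : ∀ x y, 0 ≤ b x y
  diag : ∀ x, b x x = 0
  row_summable : ∀ x, Summable (fun y => b x y)

/-- The graph `b` is connected: any two points are joined by a path of edges of
positive weight. -/
def GraphConnected {X : Type*} (b : X → X → ℝ) : Prop :=
  ∀ x y : X, Relation.ReflTransGen (fun a c => 0 < b a c) x y

/-- `(X,m)` is a finite discrete measure space: `m > 0` everywhere and `m(X) < ∞`. -/
structure FinMeasure {X : Type*} (m : X → ℝ) : Prop where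
  pos : ∀ x, 0 < m x
  summable : Summable m

/-- The graph `b` over `(X,m)` is canonically compactifiable: every function in
`D(Q)` is bounded. -/
def CanCompact {X : Type*} (b : X → X → ℝ) (m : X → ℝ) : Prop :=
  ∀ u : X → ℝ, MemDQ b m u → ∃ M : ℝ, ∀ x, |u x| ≤ M

/-- `u ∈ D(L)` with `L u = f` for the Neumann Laplacian `L`:
`u ∈ D(Q)`, `f ∈ ℓ²(X,m)` and `Q(u,v) = ⟨f,v⟩` for all `v ∈ D(Q)`. -/
def IsLap {X : Type*} (b : X → X → ℝ) (m : X → ℝ) (u f : X → ℝ) : Prop :=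
  MemDQ b m u ∧ MemL2 m f ∧
    ∀ v : X → ℝ, MemDQ b m v → energyBil b u v = ∑' x, f x * v x * m x

/-- The mean `ū = ⟨u,1⟩ / m(X)`. -/
noncomputable def mean {X : Type*} (m : X → ℝ) (u : X → ℝ) : ℝ :=
  (∑' x, u x * m x) / (∑' x, m x)


open scoped InnerProductSpace ENNReal

noncomputable section

section Aux1
variable {X : Type*} {b : X → X → ℝ} {m : X → ℝ} {u v : X → ℝ}

lemma abs_mul_le_half (x y : ℝ) : |x * y| ≤ (x ^ 2 + y ^ 2) / 2 := by
  rw [abs_mul]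
  nlinarith [sq_nonneg (|x| - |y|), sq_abs x, sq_abs y, abs_nonneg x, abs_nonneg y]

lemma summable_pair_mul (hb : IsGraph b) (hu : FinEnergy b u) (hv : FinEnergy b v) :
    Summable (fun p : X × X => b p.1 p.2 * (u p.1 - u p.2) * (v p.1 - v p.2)) := by
  apply Summable.of_abs
  refine Summable.of_nonneg_of_le (fun p => abs_nonneg _) (fun p => ?_)
    (((hu.add hv).mul_left (1/2)))
  have h1 := abs_mul_le_half (u p.1 - u p.2) (v p.1 - v p.2)
  have hb0 := hb.nonneg p.1 p.2
  calc |b p.1 p.2 * (u p.1 - u p.2) * (v p.1 - v p.2)|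
      = b p.1 p.2 * |(u p.1 - u p.2) * (v p.1 - v p.2)| := by
        rw [mul_assoc, abs_mul, abs_of_nonneg hb0]
    _ ≤ b p.1 p.2 * (((u p.1 - u p.2) ^ 2 + (v p.1 - v p.2) ^ 2) / 2) :=
        mul_le_mul_of_nonneg_left h1 hb0
    _ = 1/2 * (b p.1 p.2 * (u p.1 - u p.2) ^ 2 + b p.1 p.2 * (v p.1 - v p.2) ^ 2) := by ring

lemma summable_l1 (hm : FinMeasure m) (hu : MemL2 m u) : Summable fun x => u x * m x := by
  apply Summable.of_abs
  refine Summable.of_nonneg_of_le (fun x => abs_nonneg _) (fun x => ?_)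
    ((hu.add hm.summable).mul_left (1/2))
  have h0 := (hm.pos x).le
  calc |u x * m x| = |u x| * m x := by rw [abs_mul, abs_of_nonneg h0]
    _ ≤ ((u x ^ 2 + 1) / 2) * m x := by
        refine mul_le_mul_of_nonneg_right ?_ h0
        nlinarith [sq_nonneg (|u x| - 1), sq_abs (u x)]
    _ = 1/2 * (u x ^ 2 * m x + m x) := by ring

lemma summable_l1_pair (hm : FinMeasure m) (hu : MemL2 m u) (hv : MemL2 m v) :
    Summable fun x => u x * v x * m x := by
  apply Summable.of_abs
  refine Summable.of_nonneg_of_le (fun x => abs_nonneg _) (fun x => ?_)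
    ((hu.add hv).mul_left (1/2))
  have h0 := (hm.pos x).le
  calc |u x * v x * m x| = |u x * v x| * m x := by rw [abs_mul, abs_of_nonneg h0]
    _ ≤ ((u x ^ 2 + v x ^ 2) / 2) * m x :=
        mul_le_mul_of_nonneg_right (abs_mul_le_half _ _) h0
    _ = 1/2 * (u x ^ 2 * m x + v x ^ 2 * m x) := by ring

lemma memL2_sub (hm : FinMeasure m) (hu : MemL2 m u) (hv : MemL2 m v) :
    MemL2 m (fun x => u x - v x) := by
  refine Summable.of_nonneg_of_le (fun x => mul_nonneg (sq_nonneg _) (hm.pos x).le)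
    (fun x => ?_) (((hu.mul_left 2).add (hv.mul_left 2)))
  have : (u x - v x) ^ 2 * m x ≤ (2 * u x ^ 2 + 2 * v x ^ 2) * m x := by
    refine mul_le_mul_of_nonneg_right ?_ (hm.pos x).le
    nlinarith [sq_nonneg (u x + v x)]
  show (u x - v x) ^ 2 * m x ≤ 2 * (u x ^ 2 * m x) + 2 * (v x ^ 2 * m x)
  linarith [this, (by ring : (2 * u x ^ 2 + 2 * v x ^ 2) * m x
    = 2 * (u x ^ 2 * m x) + 2 * (v x ^ 2 * m x))]

lemma finEnergy_sub (hb : IsGraph b) (hu : FinEnergy b u) (hv : FinEnergy b v) :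
    FinEnergy b (fun x => u x - v x) := by
  refine Summable.of_nonneg_of_le
    (fun p => mul_nonneg (hb.nonneg _ _) (sq_nonneg _)) (fun p => ?_)
    (((hu.mul_left 2).add (hv.mul_left 2)))
  have hb0 := hb.nonneg p.1 p.2
  have : b p.1 p.2 * (u p.1 - v p.1 - (u p.2 - v p.2)) ^ 2
      ≤ b p.1 p.2 * (2 * (u p.1 - u p.2) ^ 2 + 2 * (v p.1 - v p.2) ^ 2) := by
    refine mul_le_mul_of_nonneg_left ?_ hb0
    nlinarith [sq_nonneg ((u p.1 - u p.2) + (v p.1 - v p.2))]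
  calc b p.1 p.2 * ((fun x => u x - v x) p.1 - (fun x => u x - v x) p.2) ^ 2
      = b p.1 p.2 * (u p.1 - v p.1 - (u p.2 - v p.2)) ^ 2 := rfl
    _ ≤ b p.1 p.2 * (2 * (u p.1 - u p.2) ^ 2 + 2 * (v p.1 - v p.2) ^ 2) := this
    _ = 2 * (b p.1 p.2 * (u p.1 - u p.2) ^ 2) + 2 * (b p.1 p.2 * (v p.1 - v p.2) ^ 2) := by ring

lemma memL2_const (hm : FinMeasure m) (c : ℝ) : MemL2 m (fun _ => c) := by
  refine Summable.congr (hm.summable.mul_left (c ^ 2)) (fun x => rfl)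

lemma memL2_smul (hu : MemL2 m u) (c : ℝ) : MemL2 m (fun x => c * u x) := by
  refine Summable.congr (hu.mul_left (c ^ 2)) (fun x => by ring)

lemma finEnergy_smul (hu : FinEnergy b u) (c : ℝ) : FinEnergy b (fun x => c * u x) := by
  refine Summable.congr (hu.mul_left (c ^ 2)) (fun p => by ring)

lemma memDQ_sub (hb : IsGraph b) (hm : FinMeasure m) (hu : MemDQ b m u) (hv : MemDQ b m v) :
    MemDQ b m (fun x => u x - v x) :=
  ⟨memL2_sub hm hu.1 hv.1, finEnergy_sub hb hu.2 hv.2⟩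

lemma memDQ_smul (hu : MemDQ b m u) (c : ℝ) : MemDQ b m (fun x => c * u x) :=
  ⟨memL2_smul hu.1 c, finEnergy_smul hu.2 c⟩

lemma memDQ_sub_const (hb : IsGraph b) (hm : FinMeasure m) (hu : MemDQ b m u) (c : ℝ) :
    MemDQ b m (fun x => u x - c) :=
  memDQ_sub hb hm hu ⟨memL2_const hm c, Summable.congr summable_zero (fun p => by simp)⟩

lemma energy_nonneg (hb : IsGraph b) (u : X → ℝ) : 0 ≤ energy b u :=
  mul_nonneg (by norm_num)
    (tsum_nonneg fun p => mul_nonneg (hb.nonneg _ _) (sq_nonneg _))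

lemma nsum_nonneg (hm : FinMeasure m) (u : X → ℝ) : 0 ≤ ∑' x, u x ^ 2 * m x :=
  tsum_nonneg fun x => mul_nonneg (sq_nonneg _) (hm.pos x).le

lemma energy_smul (c : ℝ) (u : X → ℝ) : energy b (fun x => c * u x) = c ^ 2 * energy b u := by
  unfold energy
  rw [show (fun p : X × X => b p.1 p.2 * ((fun x => c * u x) p.1 - (fun x => c * u x) p.2) ^ 2)
    = fun p : X × X => c ^ 2 * (b p.1 p.2 * (u p.1 - u p.2) ^ 2) from funext fun p => by ring,
    tsum_mul_left]
  ring

lemma nsum_smul (c : ℝ) (u : X → ℝ) :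
    ∑' x, (c * u x) ^ 2 * m x = c ^ 2 * ∑' x, u x ^ 2 * m x := by
  rw [show (fun x => (c * u x) ^ 2 * m x) = fun x => c ^ 2 * (u x ^ 2 * m x) from
    funext fun x => by ring, tsum_mul_left]

lemma meansum_smul (c : ℝ) (u : X → ℝ) :
    ∑' x, (c * u x) * m x = c * ∑' x, u x * m x := by
  rw [show (fun x => (c * u x) * m x) = fun x => c * (u x * m x) from
    funext fun x => by ring, tsum_mul_left]

lemma const_of_edges (hconn : GraphConnected b) (h : ∀ x y, 0 < b x y → u x = u y) :
    ∀ x y, u x = u y := by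
  intro x y
  induction hconn x y with
  | refl => rfl
  | tail _ hstep ih => exact ih.trans (h _ _ hstep)

lemma const_of_energy_zero (hb : IsGraph b) (hconn : GraphConnected b)
    (hu : FinEnergy b u) (h0 : ∑' p : X × X, b p.1 p.2 * (u p.1 - u p.2) ^ 2 = 0) :
    ∀ x y, u x = u y := by
  have hterm : ∀ p : X × X, b p.1 p.2 * (u p.1 - u p.2) ^ 2 = 0 := by
    intro p
    have h1 : b p.1 p.2 * (u p.1 - u p.2) ^ 2 ≤ 0 := by
      rw [← h0]
      exact Summable.le_tsum hu p fun j _ => mul_nonneg (hb.nonneg _ _) (sq_nonneg _)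
    exact le_antisymm h1 (mul_nonneg (hb.nonneg _ _) (sq_nonneg _))
  refine const_of_edges hconn (fun x y hxy => ?_)
  have := (mul_eq_zero.1 (hterm (x, y))).resolve_left (ne_of_gt hxy)
  have := pow_eq_zero_iff (n := 2) (by norm_num) |>.1 this
  linarith [this]

end Aux1

set_option maxHeartbeats 1000000
set_option synthInstance.maxHeartbeats 200000

section Aux2
variable {X : Type*}

lemma memℓp_two_iff {ι : Type*} (g : ι → ℝ) : Memℓp g 2 ↔ Summable (fun i => g i ^ 2) := by
  rw [memℓp_gen_iff (by norm_num : (0:ℝ) < (2:ℝ≥0∞).toReal)]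
  rw [show (fun i => ‖g i‖ ^ (2:ℝ≥0∞).toReal) = fun i => g i ^ 2 from funext fun i => by
    rw [show ((2:ℝ≥0∞).toReal) = ((2:ℕ):ℝ) by norm_num, Real.rpow_natCast,
      Real.norm_eq_abs, sq_abs]]

lemma lp_norm_sq {ι : Type*} (f : lp (fun _ : ι => ℝ) 2) : ‖f‖ ^ 2 = ∑' i, f i ^ 2 := by
  have h := lp.norm_rpow_eq_tsum (p := 2) (by norm_num) f
  rw [show ((2:ℝ≥0∞).toReal) = ((2:ℕ):ℝ) by norm_num] at h
  simp only [Real.rpow_natCast, Real.norm_eq_abs, sq_abs] at h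
  simpa using h

lemma lp_inner_eq {ι : Type*} (f g : lp (fun _ : ι => ℝ) 2) : ⟪f, g⟫_ℝ = ∑' i, f i * g i := by
  rw [lp.inner_eq_tsum]
  simp [RCLike.inner_apply]
  exact tsum_congr fun i => mul_comm _ _

lemma lp_eval_continuous {ι : Type*} (i : ι) :
    Continuous (fun f : lp (fun _ : ι => ℝ) 2 => f i) := by
  refine (LipschitzWith.of_dist_le_mul (K := 1) fun f g => ?_).continuous
  rw [dist_eq_norm, dist_eq_norm]
  calc ‖f i - g i‖ = ‖(f - g) i‖ := by rw [lp.coeFn_sub]; rfl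
    _ ≤ ‖f - g‖ := lp.norm_apply_le_norm (by norm_num) _ i
    _ ≤ 1 * ‖f - g‖ := by rw [one_mul]

variable (X) in
abbrev HH := WithLp 2 (lp (fun _ : X × X => ℝ) 2 × lp (fun _ : X => ℝ) 2)

variable (b : X → X → ℝ) (m : X → ℝ)

/-- Edge part of the isometric embedding. -/
noncomputable def psiE (u : X → ℝ) : X × X → ℝ := fun p => Real.sqrt (b p.1 p.2 / 2) * (u p.1 - u p.2)

/-- Vertex part of the isometric embedding. -/
noncomputable def psiX (u : X → ℝ) : X → ℝ := fun x => u x * Real.sqrt (m x)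

variable {b m}

lemma psiE_sq (hb : IsGraph b) (u : X → ℝ) (p : X × X) :
    psiE b u p ^ 2 = 1/2 * (b p.1 p.2 * (u p.1 - u p.2) ^ 2) := by
  unfold psiE
  rw [mul_pow, Real.sq_sqrt (div_nonneg (hb.nonneg p.1 p.2) (by norm_num) : (0:ℝ) ≤ b p.1 p.2 / 2)]
  ring

lemma psiX_sq (hm : FinMeasure m) (u : X → ℝ) (x : X) :
    psiX m u x ^ 2 = u x ^ 2 * m x := by
  unfold psiX
  rw [mul_pow, Real.sq_sqrt (hm.pos x).le]

lemma memℓp_psiE_iff (hb : IsGraph b) (u : X → ℝ) :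
    Memℓp (psiE b u) 2 ↔ FinEnergy b u := by
  rw [memℓp_two_iff, show (fun p => psiE b u p ^ 2)
    = fun p : X × X => 1/2 * (b p.1 p.2 * (u p.1 - u p.2) ^ 2) from funext (psiE_sq hb u),
    summable_mul_left_iff (by norm_num : (1/2:ℝ) ≠ 0)]
  exact Iff.rfl

lemma memℓp_psiX_iff (hm : FinMeasure m) (u : X → ℝ) :
    Memℓp (psiX m u) 2 ↔ MemL2 m u := by
  rw [memℓp_two_iff, show (fun x => psiX m u x ^ 2)
    = fun x => u x ^ 2 * m x from funext (psiX_sq hm u)]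
  exact Iff.rfl

variable (b m) in
/-- The isometric embedding of `D(Q)` into a Hilbert space. -/
noncomputable def Phi (u : X → ℝ) (h1 : Memℓp (psiE b u) 2) (h2 : Memℓp (psiX m u) 2) :
    HH X := (WithLp.equiv 2 _).symm (⟨psiE b u, h1⟩, ⟨psiX m u, h2⟩)

lemma Phi_fst (u : X → ℝ) (h1 : Memℓp (psiE b u) 2) (h2 : Memℓp (psiX m u) 2) (p : X × X) :
    (Phi b m u h1 h2).fst p = psiE b u p := rfl

lemma Phi_snd (u : X → ℝ) (h1 : Memℓp (psiE b u) 2) (h2 : Memℓp (psiX m u) 2) (x : X) :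
    (Phi b m u h1 h2).snd x = psiX m u x := rfl

variable (b m) in
/-- The range of the embedding, as a submodule. -/
noncomputable def SS : Submodule ℝ (HH X) where
  carrier := {w | ∃ u : X → ℝ, (∀ p, w.fst p = psiE b u p) ∧ (∀ x, w.snd x = psiX m u x)}
  zero_mem' := by
    refine ⟨fun _ => 0, fun p => ?_, fun x => ?_⟩ <;>
      simp [psiE, psiX, lp.coeFn_zero, Prod.fst_zero, Prod.snd_zero]
  add_mem' := by
    rintro w w' ⟨u, h1, h2⟩ ⟨u', h1', h2'⟩
    refine ⟨fun x => u x + u' x, fun p => ?_, fun x => ?_⟩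
    · have : (w + w').fst = w.fst + w'.fst := rfl
      rw [this, lp.coeFn_add, Pi.add_apply, h1 p, h1' p]
      unfold psiE; ring
    · have : (w + w').snd = w.snd + w'.snd := rfl
      rw [this, lp.coeFn_add, Pi.add_apply, h2 x, h2' x]
      unfold psiX; ring
  smul_mem' := by
    rintro c w ⟨u, h1, h2⟩
    refine ⟨fun x => c * u x, fun p => ?_, fun x => ?_⟩
    · have : (c • w).fst = c • w.fst := rfl
      rw [this, lp.coeFn_smul, Pi.smul_apply, smul_eq_mul, h1 p]
      unfold psiE; ring
    · have : (c • w).snd = c • w.snd := rfl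
      rw [this, lp.coeFn_smul, Pi.smul_apply, smul_eq_mul, h2 x]
      unfold psiX; ring

lemma Phi_mem_SS (u : X → ℝ) (h1 : Memℓp (psiE b u) 2) (h2 : Memℓp (psiX m u) 2) :
    Phi b m u h1 h2 ∈ SS b m :=
  ⟨u, fun p => rfl, fun x => rfl⟩

lemma SS_spec (hb : IsGraph b) (hm : FinMeasure m) {w : HH X} (hw : w ∈ SS b m) :
    ∃ u : X → ℝ, MemDQ b m u ∧ (∀ p, w.fst p = psiE b u p) ∧ (∀ x, w.snd x = psiX m u x) := by
  obtain ⟨u, h1, h2⟩ := hw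
  have hE : Memℓp (psiE b u) 2 := by
    have := w.fst.property
    rwa [show (⇑w.fst : (X × X) → ℝ) = psiE b u from funext h1] at this
  have hX : Memℓp (psiX m u) 2 := by
    have := w.snd.property
    rwa [show (⇑w.snd : X → ℝ) = psiX m u from funext h2] at this
  exact ⟨u, ⟨(memℓp_psiX_iff hm u).1 hX, (memℓp_psiE_iff hb u).1 hE⟩, h1, h2⟩

lemma norm_fst_sq (hb : IsGraph b) {w : HH X} {u : X → ℝ}
    (h1 : ∀ p, w.fst p = psiE b u p) : ‖w.fst‖ ^ 2 = energy b u := by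
  rw [lp_norm_sq, show (fun p => w.fst p ^ 2)
    = fun p : X × X => 1/2 * (b p.1 p.2 * (u p.1 - u p.2) ^ 2) from funext fun p => by
      rw [h1 p, psiE_sq hb], tsum_mul_left]
  rfl

lemma norm_snd_sq (hm : FinMeasure m) {w : HH X} {u : X → ℝ}
    (h2 : ∀ x, w.snd x = psiX m u x) : ‖w.snd‖ ^ 2 = ∑' x, u x ^ 2 * m x := by
  rw [lp_norm_sq, show (fun x => w.snd x ^ 2)
    = fun x => u x ^ 2 * m x from funext fun x => by rw [h2 x, psiX_sq hm]]

lemma norm_HH_sq (hb : IsGraph b) (hm : FinMeasure m) {w : HH X} {u : X → ℝ}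
    (h1 : ∀ p, w.fst p = psiE b u p) (h2 : ∀ x, w.snd x = psiX m u x) :
    ‖w‖ ^ 2 = energy b u + ∑' x, u x ^ 2 * m x := by
  rw [WithLp.prod_norm_sq_eq_of_L2, norm_fst_sq hb h1, norm_snd_sq hm h2]

lemma inner_fst_eq (hb : IsGraph b) {w v : HH X} {u u' : X → ℝ}
    (h1 : ∀ p, w.fst p = psiE b u p) (h1' : ∀ p, v.fst p = psiE b u' p) :
    ⟪w.fst, v.fst⟫_ℝ = energyBil b u u' := by
  rw [lp_inner_eq, show (fun p => w.fst p * v.fst p)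
    = fun p : X × X => 1/2 * (b p.1 p.2 * (u p.1 - u p.2) * (u' p.1 - u' p.2)) from
      funext fun p => by
        rw [h1 p, h1' p]
        unfold psiE
        rw [mul_mul_mul_comm, Real.mul_self_sqrt (div_nonneg (hb.nonneg p.1 p.2) (by norm_num) : (0:ℝ) ≤ b p.1 p.2 / 2)]
        ring, tsum_mul_left]
  rfl

lemma isClosed_SS (hm : FinMeasure m) : IsClosed ((SS b m : Set (HH X))) := by
  refine IsSeqClosed.isClosed (fun ws w hmem hlim => ?_)
  have hcontf : ∀ p : X × X, Continuous (fun v : HH X => v.fst p) :=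
    fun p => (lp_eval_continuous p).comp
      (continuous_fst.comp (WithLp.prodContinuousLinearEquiv 2 ℝ _ _).continuous)
  have hconts : ∀ x : X, Continuous (fun v : HH X => v.snd x) :=
    fun x => (lp_eval_continuous x).comp
      (continuous_snd.comp (WithLp.prodContinuousLinearEquiv 2 ℝ _ _).continuous)
  -- recovered limit function
  set u : X → ℝ := fun x => w.snd x / Real.sqrt (m x) with hu
  -- pointwise recovered functions
  have hsqrt : ∀ x, Real.sqrt (m x) ≠ 0 := fun x => (Real.sqrt_pos.2 (hm.pos x)).ne'
  choose uu huu1 huu2 using hmem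
  have hupt : ∀ x, Filter.Tendsto (fun n => uu n x) Filter.atTop (nhds (u x)) := by
    intro x
    have h1 : Filter.Tendsto (fun n => (ws n).snd x) Filter.atTop (nhds (w.snd x)) :=
      ((hconts x).tendsto w).comp hlim
    have h2 : (fun n => uu n x) = fun n => (ws n).snd x / Real.sqrt (m x) := by
      funext n
      rw [huu2 n x]
      unfold psiX
      rw [mul_div_assoc, div_self (hsqrt x), mul_one]
    rw [h2, hu]
    exact h1.div_const _
  refine ⟨u, fun p => ?_, fun x => ?_⟩
  · have h1 : Filter.Tendsto (fun n => (ws n).fst p) Filter.atTop (nhds (w.fst p)) :=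
      ((hcontf p).tendsto w).comp hlim
    have h2 : Filter.Tendsto (fun n => (ws n).fst p) Filter.atTop (nhds (psiE b u p)) := by
      have : (fun n => (ws n).fst p)
          = fun n => Real.sqrt (b p.1 p.2 / 2) * (uu n p.1 - uu n p.2) := by
        funext n; rw [huu1 n p]; rfl
      rw [this]
      exact (((hupt p.1).sub (hupt p.2)).const_mul _)
    exact tendsto_nhds_unique h1 h2
  · have h1 : Filter.Tendsto (fun n => (ws n).snd x) Filter.atTop (nhds (w.snd x)) :=
      ((hconts x).tendsto w).comp hlim
    have h2 : Filter.Tendsto (fun n => (ws n).snd x) Filter.atTop (nhds (psiX m u x)) := by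
      have : (fun n => (ws n).snd x) = fun n => uu n x * Real.sqrt (m x) := by
        funext n; rw [huu2 n x]; rfl
      rw [this]
      exact ((hupt x).mul_const _)
    exact tendsto_nhds_unique h1 h2

end Aux2

section Aux3
variable {X : Type*} {b : X → X → ℝ} {m : X → ℝ}

variable (b m) in
/-- The image of the constant function 1. -/
noncomputable def oneH (hm : FinMeasure m) : HH X :=
  Phi b m (fun _ => 1)
    (by rw [show psiE b (fun _ => (1:ℝ)) = fun _ => (0:ℝ) from funext fun p => by
          unfold psiE; ring]
        exact zero_mem_ℓp')
    ((memℓp_psiX_iff hm _).2 (memL2_const hm 1))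

lemma inner_oneH (hm : FinMeasure m) (w : HH X) {u : X → ℝ}
    (h2 : ∀ x, w.snd x = psiX m u x) :
    ⟪oneH b m hm, w⟫_ℝ = ∑' x, u x * m x := by
  rw [WithLp.prod_inner_apply, lp_inner_eq, lp_inner_eq]
  have hfst : (∑' p : X × X, (oneH b m hm).fst p * w.fst p) = 0 := by
    rw [show (fun p : X × X => (oneH b m hm).fst p * w.fst p) = fun _ => (0:ℝ) from
      funext fun p => by
        rw [show (oneH b m hm).fst p = psiE b (fun _ => (1:ℝ)) p from rfl]
        unfold psiE; ring]
    exact tsum_zero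
  have hsnd : (∑' x, (oneH b m hm).snd x * w.snd x) = ∑' x, u x * m x := by
    refine tsum_congr fun x => ?_
    rw [show (oneH b m hm).snd x = psiX m (fun _ => (1:ℝ)) x from rfl, h2 x]
    unfold psiX
    rw [one_mul, mul_left_comm, Real.mul_self_sqrt (hm.pos x).le]
  have := congrArg₂ (· + ·) hfst hsnd
  simp only [zero_add] at this
  exact this

lemma sup_bound (hb : IsGraph b) (hm : FinMeasure m) (hcc : CanCompact b m) :
    ∃ C : ℝ, 0 ≤ C ∧ ∀ u : X → ℝ, MemDQ b m u → ∀ x,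
      u x ^ 2 ≤ C * (energy b u + ∑' y, u y ^ 2 * m y) := by
  cases isEmpty_or_nonempty X with
  | inl h => exact ⟨0, le_refl 0, fun u _ x => (IsEmpty.false x).elim⟩
  | inr hne =>
  haveI : CompleteSpace (SS b m (X := X)) := (isClosed_SS hm).completeSpace_coe
  set A : ℕ → Set (SS b m (X := X)) := fun k =>
    {w | ∀ x, |((w : HH X)).snd x| ≤ (k : ℝ) * Real.sqrt (m x)} with hA
  have hclosed : ∀ k, IsClosed (A k) := by
    intro k
    have : A k = ⋂ x : X,
        {w : SS b m (X := X) | |((w : HH X)).snd x| ≤ (k:ℝ) * Real.sqrt (m x)} := by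
      ext w; simp [hA, Set.mem_iInter, Set.mem_setOf_eq]
    rw [this]
    refine isClosed_iInter fun x => ?_
    have hc : Continuous fun w : SS b m (X := X) => |((w : HH X)).snd x| :=
      continuous_abs.comp ((lp_eval_continuous x).comp
        (continuous_snd.comp ((WithLp.prodContinuousLinearEquiv 2 ℝ _ _).continuous.comp
          continuous_subtype_val)))
    exact isClosed_le hc continuous_const
  have hcover : (⋃ k, A k) = Set.univ := by
    ext w; simp only [Set.mem_iUnion, Set.mem_univ, iff_true]
    obtain ⟨u, hDQ, h1, h2⟩ := SS_spec hb hm w.property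
    obtain ⟨M, hM⟩ := hcc u hDQ
    obtain ⟨k, hk⟩ := exists_nat_ge M
    refine ⟨k, fun x => ?_⟩
    rw [h2 x]
    unfold psiX
    rw [abs_mul, abs_of_nonneg (Real.sqrt_nonneg _)]
    exact mul_le_mul_of_nonneg_right ((hM x).trans hk) (Real.sqrt_nonneg _)
  haveI : BaireSpace (SS b m (X := X)) := BaireSpace.of_completelyPseudoMetrizable
  obtain ⟨k, hk⟩ := nonempty_interior_of_iUnion_of_closed hclosed hcover
  obtain ⟨w₀, hw₀⟩ := hk
  rw [mem_interior_iff_mem_nhds, Metric.mem_nhds_iff] at hw₀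
  obtain ⟨ε, hε, hball⟩ := hw₀
  refine ⟨(4 * k / ε) ^ 2, sq_nonneg _, fun u hDQ x => ?_⟩
  have h1 : Memℓp (psiE b u) 2 := (memℓp_psiE_iff hb u).2 hDQ.2
  have h2 : Memℓp (psiX m u) 2 := (memℓp_psiX_iff hm u).2 hDQ.1
  set w : HH X := Phi b m u h1 h2 with hw
  have hnorm : ‖w‖ ^ 2 = energy b u + ∑' y, u y ^ 2 * m y :=
    norm_HH_sq hb hm (Phi_fst u h1 h2) (Phi_snd u h1 h2)
  have hsx : 0 < Real.sqrt (m x) := Real.sqrt_pos.2 (hm.pos x)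
  have key : |u x| ≤ 4 * k / ε * ‖w‖ := by
    rcases eq_or_ne ‖w‖ 0 with h0 | h0
    · have hw0 : w = 0 := norm_eq_zero.1 h0
      have hx0 : psiX m u x = 0 := by
        have := congrArg (fun v : HH X => v.snd x) hw0
        exact (Phi_snd u h1 h2 x).symm.trans (by simpa [lp.coeFn_zero] using this)
      have hux : u x = 0 := by
        unfold psiX at hx0
        rcases mul_eq_zero.1 hx0 with h | h
        · exact h
        · exact absurd h hsx.ne'
      rw [hux, h0]
      simp
    · have hw0 : 0 < ‖w‖ := (norm_nonneg w).lt_of_ne (Ne.symm h0)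
      set wS : SS b m (X := X) := ⟨w, Phi_mem_SS u h1 h2⟩ with hwS
      have hnwS : ‖wS‖ = ‖w‖ := rfl
      set t : ℝ := ε / (2 * ‖w‖) with ht
      have htpos : 0 < t := by positivity
      have hmem1 : w₀ + t • wS ∈ A k := by
        apply hball
        rw [Metric.mem_ball, dist_eq_norm, add_sub_cancel_left, norm_smul,
          Real.norm_eq_abs, abs_of_pos htpos, hnwS, ht]
        rw [show ε / (2 * ‖w‖) * ‖w‖ = ε / 2 from by field_simp]
        linarith
      have hmem0 : w₀ ∈ A k := hball (Metric.mem_ball_self hε)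
      have e1 := hmem1 x
      have e0 := hmem0 x
      have hco : ((w₀ + t • wS : SS b m (X := X)) : HH X).snd x
          = (w₀ : HH X).snd x + t * (w.snd x) := by
        have hcoe : ((w₀ + t • wS : SS b m (X := X)) : HH X) = (w₀ : HH X) + t • w := rfl
        rw [hcoe]
        have : ((w₀ : HH X) + t • w).snd = (w₀ : HH X).snd + t • w.snd := rfl
        rw [this, lp.coeFn_add, Pi.add_apply, lp.coeFn_smul, Pi.smul_apply, smul_eq_mul]
      have htr : t * |w.snd x| ≤ 2 * k * Real.sqrt (m x) := by
        have h3 : |t * (w.snd x)| ≤ |((w₀ + t • wS : SS b m (X := X)) : HH X).snd x|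
            + |(w₀ : HH X).snd x| := by
          rw [hco]
          calc |t * w.snd x| = |(w₀ : HH X).snd x + t * w.snd x - (w₀ : HH X).snd x| := by
                ring_nf
            _ ≤ _ := abs_sub _ _
        rw [abs_mul, abs_of_pos htpos] at h3
        calc t * |w.snd x| ≤ (k:ℝ) * Real.sqrt (m x) + (k:ℝ) * Real.sqrt (m x) :=
              h3.trans (add_le_add e1 e0)
          _ = 2 * k * Real.sqrt (m x) := by ring
      have hwsx : w.snd x = u x * Real.sqrt (m x) := Phi_snd u h1 h2 x
      rw [hwsx, abs_mul, abs_of_nonneg (Real.sqrt_nonneg _)] at htr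
      -- t * |u x| * √(m x) ≤ 2k √(m x)
      have h4 : t * |u x| ≤ 2 * k := by
        have := htr
        rw [← mul_assoc] at this
        exact le_of_mul_le_mul_right this hsx
      have h5 : |u x| ≤ 2 * k / t := by
        rw [le_div_iff₀ htpos]
        linarith [h4, mul_comm t (|u x|)]
      have h6 : 2 * k / t = 4 * k / ε * ‖w‖ := by
        rw [ht]
        field_simp
        ring
      rw [h6] at h5
      exact h5
  have : u x ^ 2 ≤ (4 * k / ε * ‖w‖) ^ 2 := by
    rw [← sq_abs (u x)]
    exact pow_le_pow_left₀ (abs_nonneg _) key 2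
  calc u x ^ 2 ≤ (4 * k / ε * ‖w‖) ^ 2 := this
    _ = (4 * k / ε) ^ 2 * ‖w‖ ^ 2 := by ring
    _ = (4 * k / ε) ^ 2 * (energy b u + ∑' y, u y ^ 2 * m y) := by rw [hnorm]

end Aux3

section Aux4
variable {X : Type*} {b : X → X → ℝ} {m : X → ℝ}

lemma poincare [Countable X] (hb : IsGraph b) (hconn : GraphConnected b) (hm : FinMeasure m)
    (hcc : CanCompact b m) :
    ∃ C : ℝ, 0 ≤ C ∧ ∀ u : X → ℝ, MemDQ b m u → (∑' x, u x * m x) = 0 →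
      (∑' x, u x ^ 2 * m x) ≤ C * energy b u := by
  cases isEmpty_or_nonempty X with
  | inl h =>
    refine ⟨0, le_refl 0, fun u _ _ => ?_⟩
    rw [tsum_empty]
    simp
  | inr hne =>
  by_contra hcon
  push_neg at hcon
  obtain ⟨Cb, hCb0, hCb⟩ := sup_bound hb hm hcc
  have hsel : ∀ n : ℕ, ∃ u : X → ℝ, MemDQ b m u ∧ (∑' x, u x * m x) = 0 ∧
      (∑' x, u x ^ 2 * m x) = 1 ∧ energy b u < 1 / ((n : ℝ) + 1) := by
    intro n
    obtain ⟨u, hDQ, hmean, hlt⟩ := hcon ((n : ℝ) + 1) (by positivity)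
    have hE0 : 0 ≤ energy b u := energy_nonneg hb u
    have hN0 : 0 < ∑' x, u x ^ 2 * m x := lt_of_le_of_lt (by positivity) hlt
    set c : ℝ := 1 / Real.sqrt (∑' x, u x ^ 2 * m x) with hc
    refine ⟨fun x => c * u x, memDQ_smul hDQ c, ?_, ?_, ?_⟩
    · rw [meansum_smul, hmean, mul_zero]
    · rw [nsum_smul, hc, div_pow, one_pow, Real.sq_sqrt hN0.le,
        one_div_mul_cancel hN0.ne']
    · rw [energy_smul, hc, div_pow, one_pow, Real.sq_sqrt hN0.le,
        div_mul_eq_mul_div, one_mul, div_lt_div_iff₀ hN0 (by positivity), one_mul]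
      calc energy b u * ((n:ℝ) + 1) = ((n:ℝ) + 1) * energy b u := by ring
        _ < ∑' x, u x ^ 2 * m x := hlt
  choose v hvDQ hvmean hvnorm hvE using hsel
  have hMbd : ∀ n x, |v n x| ≤ Real.sqrt (2 * Cb) := by
    intro n x
    have h := hCb (v n) (hvDQ n) x
    have hE1 : energy b (v n) ≤ 1 := by
      have h1 : energy b (v n) < 1/((n:ℝ)+1) := hvE n
      have h2 : (1:ℝ)/((n:ℝ)+1) ≤ 1 := by
        rw [div_le_one (by positivity)]
        linarith [Nat.cast_nonneg (α := ℝ) n]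
      linarith
    have h3 : v n x ^ 2 ≤ 2 * Cb := by
      rw [hvnorm n] at h
      nlinarith [h, hCb0, energy_nonneg hb (v n)]
    calc |v n x| = Real.sqrt (v n x ^ 2) := (Real.sqrt_sq_eq_abs _).symm
      _ ≤ Real.sqrt (2 * Cb) := Real.sqrt_le_sqrt h3
  set M := Real.sqrt (2 * Cb) with hM
  have hM0 : 0 ≤ M := Real.sqrt_nonneg _
  have hcomp : IsCompact (Set.univ.pi fun _ : X => Set.Icc (-M) M) :=
    isCompact_univ_pi fun _ => isCompact_Icc
  have hmemset : ∀ n, v n ∈ (Set.univ.pi fun _ : X => Set.Icc (-M) M) := by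
    intro n
    rw [Set.mem_univ_pi]
    intro x
    have := abs_le.1 (hMbd n x)
    exact ⟨this.1, this.2⟩
  obtain ⟨u, hu_mem, φ, hφ, hconv⟩ := hcomp.isSeqCompact hmemset
  have hpt : ∀ x, Filter.Tendsto (fun k => v (φ k) x) Filter.atTop (nhds (u x)) :=
    fun x => tendsto_pi_nhds.1 hconv x
  have hE0 : Filter.Tendsto (fun k => energy b (v (φ k))) Filter.atTop (nhds 0) := by
    refine squeeze_zero (fun k => energy_nonneg hb _) (g := fun k : ℕ => 1 / ((k:ℝ) + 1))
      (fun k => ?_) tendsto_one_div_add_atTop_nhds_zero_nat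
    refine (le_of_lt (hvE (φ k))).trans ?_
    have h1 : ((k:ℝ) + 1) ≤ ((φ k : ℝ) + 1) := by
      have hkk : k ≤ φ k := hφ.le_apply
      have : (k:ℝ) ≤ (φ k : ℝ) := Nat.cast_le.2 hkk
      linarith
    exact one_div_le_one_div_of_le (by positivity) h1
  have hedge0 : ∀ p : X × X, b p.1 p.2 * (u p.1 - u p.2) ^ 2 = 0 := by
    intro p
    have hterm : Filter.Tendsto (fun k => b p.1 p.2 * (v (φ k) p.1 - v (φ k) p.2) ^ 2)
        Filter.atTop (nhds (b p.1 p.2 * (u p.1 - u p.2) ^ 2)) :=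
      (((hpt p.1).sub (hpt p.2)).pow 2).const_mul _
    have hle : ∀ k, b p.1 p.2 * (v (φ k) p.1 - v (φ k) p.2) ^ 2 ≤ 2 * energy b (v (φ k)) := by
      intro k
      have h := Summable.le_tsum (hvDQ (φ k)).2 p fun j _ => mul_nonneg (hb.nonneg _ _) (sq_nonneg _)
      have h2 : (∑' q : X × X, b q.1 q.2 * (v (φ k) q.1 - v (φ k) q.2) ^ 2)
          = 2 * energy b (v (φ k)) := by unfold energy; ring
      linarith
    have hub : b p.1 p.2 * (u p.1 - u p.2) ^ 2 ≤ 0 :=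
      le_of_tendsto_of_tendsto' hterm (by simpa using hE0.const_mul (2:ℝ)) hle
    exact le_antisymm hub (mul_nonneg (hb.nonneg _ _) (sq_nonneg _))
  have hconst : ∀ x y, u x = u y := by
    refine const_of_edges hconn fun x y hxy => ?_
    have h1 := (mul_eq_zero.1 (hedge0 (x, y))).resolve_left (ne_of_gt hxy)
    have h2 := pow_eq_zero_iff (n := 2) (by norm_num) |>.1 h1
    linarith
  have hmean_u : (∑' x, u x * m x) = 0 := by
    have htd : Filter.Tendsto (fun k => ∑' x, v (φ k) x * m x) Filter.atTop
        (nhds (∑' x, u x * m x)) := by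
      refine tendsto_tsum_of_dominated_convergence (bound := fun x => M * m x)
        (hm.summable.mul_left M) (fun x => (hpt x).mul_const _) ?_
      refine Filter.Eventually.of_forall fun k x => ?_
      rw [Real.norm_eq_abs, abs_mul, abs_of_nonneg (hm.pos x).le]
      exact mul_le_mul_of_nonneg_right (hMbd (φ k) x) (hm.pos x).le
    have h0 : Filter.Tendsto (fun _ : ℕ => (0:ℝ)) Filter.atTop
        (nhds (∑' x, u x * m x)) := by
      have : (fun k => ∑' x, v (φ k) x * m x) = fun _ : ℕ => (0:ℝ) := by
        funext k; exact hvmean (φ k)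
      rwa [this] at htd
    exact (tendsto_nhds_unique h0 tendsto_const_nhds)
  obtain ⟨x₀⟩ := hne
  have hsum_pos : 0 < ∑' x, m x :=
    lt_of_lt_of_le (hm.pos x₀) (Summable.le_tsum hm.summable x₀ fun _ _ => (hm.pos _).le)
  have hux₀ : u x₀ = 0 := by
    have h1 : (∑' y, u y * m y) = u x₀ * ∑' y, m y := by
      rw [← tsum_mul_left]
      exact tsum_congr fun y => by rw [hconst y x₀]
    rw [hmean_u] at h1
    rcases mul_eq_zero.1 h1.symm with h | h
    · exact h
    · exact absurd h hsum_pos.ne'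
  have hu0 : ∀ x, u x = 0 := fun x => (hconst x x₀).trans hux₀
  have hNlim : Filter.Tendsto (fun k => ∑' x, v (φ k) x ^ 2 * m x) Filter.atTop
      (nhds (∑' x, u x ^ 2 * m x)) := by
    refine tendsto_tsum_of_dominated_convergence (bound := fun x => M ^ 2 * m x)
      (hm.summable.mul_left (M ^ 2)) (fun x => ((hpt x).pow 2).mul_const _) ?_
    refine Filter.Eventually.of_forall fun k x => ?_
    rw [Real.norm_eq_abs, abs_mul, abs_of_nonneg (hm.pos x).le]
    have h1 : v (φ k) x ^ 2 ≤ M ^ 2 := by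
      rw [← sq_abs]
      exact pow_le_pow_left₀ (abs_nonneg _) (hMbd (φ k) x) 2
    have h2 : |v (φ k) x ^ 2| = v (φ k) x ^ 2 := abs_of_nonneg (sq_nonneg _)
    rw [h2]
    exact mul_le_mul_of_nonneg_right h1 (hm.pos x).le
  have hone : Filter.Tendsto (fun _ : ℕ => (1:ℝ)) Filter.atTop
      (nhds (∑' x, u x ^ 2 * m x)) := by
    have : (fun k => ∑' x, v (φ k) x ^ 2 * m x) = fun _ : ℕ => (1:ℝ) := by
      funext k; exact hvnorm (φ k)
    rwa [this] at hNlim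
  have h1 : (∑' x, u x ^ 2 * m x) = 1 := tendsto_nhds_unique hone tendsto_const_nhds
  have h0 : (∑' x, u x ^ 2 * m x) = 0 := by
    rw [show (fun x => u x ^ 2 * m x) = fun _ => (0:ℝ) from funext fun x => by
      rw [hu0 x]; ring]
    exact tsum_zero
  rw [h1] at h0
  exact one_ne_zero h0

end Aux4

section Aux5
variable {X : Type*} {b : X → X → ℝ} {m : X → ℝ}

lemma energyBil_comm (b : X → X → ℝ) (u v : X → ℝ) : energyBil b u v = energyBil b v u := by
  unfold energyBil
  congr 1
  exact tsum_congr fun p => by ring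

lemma exists_solution [Countable X] (hb : IsGraph b) (hconn : GraphConnected b)
    (hm : FinMeasure m) (hcc : CanCompact b m) (hne : Nonempty X) (f : X → ℝ)
    (hf : MemL2 m f) (hf0 : (∑' x, f x * m x) = 0) :
    ∃ u : X → ℝ, (∑' x, u x * m x) = 0 ∧ MemDQ b m u ∧
      ∀ v : X → ℝ, MemDQ b m v → energyBil b u v = ∑' x, f x * v x * m x := by
  obtain ⟨Cp, hCp0, hCp⟩ := poincare hb hconn hm hcc
  obtain ⟨x₀⟩ := hne
  have hsum_pos : 0 < ∑' x, m x :=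
    lt_of_lt_of_le (hm.pos x₀) (Summable.le_tsum hm.summable x₀ fun _ _ => (hm.pos _).le)
  set K : Submodule ℝ (HH X) := SS b m ⊓ (ℝ ∙ (oneH b m hm))ᗮ with hK
  have hKclosed : IsClosed (K : Set (HH X)) := by
    rw [hK, Submodule.coe_inf]
    exact (isClosed_SS hm).inter (Submodule.isClosed_orthogonal _)
  haveI : CompleteSpace K := hKclosed.completeSpace_coe
  set J : K →L[ℝ] lp (fun _ : X × X => ℝ) 2 :=
    ((ContinuousLinearMap.fst ℝ _ _).comp
      (WithLp.prodContinuousLinearEquiv 2 ℝ _ _).toContinuousLinearMap).comp K.subtypeL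
    with hJ
  have hJapp : ∀ w : K, J w = ((w : HH X)).fst := fun w => rfl
  set B : K →L[ℝ] K →L[ℝ] ℝ := (((innerSL ℝ).comp J).flip.comp J) with hB
  have hBapp : ∀ w v : K, B w v = ⟪J v, J w⟫_ℝ := fun w v => rfl
  -- coercivity
  have hcoer : IsCoercive B := by
    refine ⟨1/(1+Cp), by positivity, fun wK => ?_⟩
    obtain ⟨hwK1, hwK2⟩ := Submodule.mem_inf.1 wK.property
    obtain ⟨u, hDQ, h1, h2⟩ := SS_spec hb hm hwK1
    have hmean : (∑' x, u x * m x) = 0 := by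
      have horth := Submodule.mem_orthogonal_singleton_iff_inner_right.1 hwK2
      rwa [inner_oneH hm _ h2] at horth
    have hnorm : ‖(wK : HH X)‖ ^ 2 = energy b u + ∑' x, u x ^ 2 * m x :=
      norm_HH_sq hb hm h1 h2
    have hP : (∑' x, u x ^ 2 * m x) ≤ Cp * energy b u := hCp u hDQ hmean
    have hBww : B wK wK = energy b u := by
      rw [hBapp, real_inner_self_eq_norm_sq, hJapp]
      exact norm_fst_sq hb h1
    have hc : ‖wK‖ = ‖(wK : HH X)‖ := Submodule.coe_norm wK
    rw [hBww, show (1:ℝ)/(1+Cp) * ‖wK‖ * ‖wK‖ = (‖wK‖ * ‖wK‖)/(1+Cp) by ring,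
      div_le_iff₀ (by positivity : (0:ℝ) < 1 + Cp)]
    have hs : ‖wK‖ * ‖wK‖ = energy b u + ∑' x, u x ^ 2 * m x := by
      rw [hc, ← pow_two, hnorm]
    rw [hs]
    have hE0 : 0 ≤ energy b u := energy_nonneg hb u
    have : energy b u * (1 + Cp) = energy b u + Cp * energy b u := by ring
    rw [this]
    linarith only [hP]
  -- the functional data
  set g : HH X := (WithLp.equiv 2 _).symm (0, ⟨psiX m f, (memℓp_psiX_iff hm f).2 hf⟩) with hg
  have hg_fst : ∀ p : X × X, g.fst p = 0 := fun p => rfl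
  have hg_snd : ∀ x : X, g.snd x = psiX m f x := fun x => rfl
  have hg_inner : ∀ (w : HH X) (u' : X → ℝ), (∀ x, w.snd x = psiX m u' x) →
      ⟪g, w⟫_ℝ = ∑' x, f x * u' x * m x := by
    intro w u' h2
    rw [WithLp.prod_inner_apply, lp_inner_eq, lp_inner_eq]
    have hfst : (∑' p : X × X, g.fst p * w.fst p) = 0 := by
      rw [show (fun p : X × X => g.fst p * w.fst p) = fun _ => (0:ℝ) from
        funext fun p => by rw [hg_fst p, zero_mul]]
      exact tsum_zero
    have hsnd : (∑' x, g.snd x * w.snd x) = ∑' x, f x * u' x * m x := by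
      refine tsum_congr fun x => ?_
      rw [hg_snd x, h2 x]
      unfold psiX
      rw [mul_mul_mul_comm, Real.mul_self_sqrt (hm.pos x).le]
    have := congrArg₂ (· + ·) hfst hsnd
    simp only [zero_add] at this
    exact this
  -- orthogonal projection of g to K
  set gK : K := K.orthogonalProjectionOnto g with hgK
  have hproj : ∀ wK : K, ⟪(gK : HH X), (wK : HH X)⟫_ℝ = ⟪g, (wK : HH X)⟫_ℝ := by
    intro wK
    have h := K.starProjection_inner_eq_zero g wK wK.property
    have e : K.starProjection g = (gK : HH X) := rfl
    rw [e] at h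
    rw [inner_sub_left] at h
    linarith [h]
  -- Lax–Milgram
  set vstar : K := hcoer.continuousLinearEquivOfBilin.symm gK with hvstar
  have hLM : ∀ wK : K, B vstar wK = ⟪(gK : HH X), (wK : HH X)⟫_ℝ := by
    intro wK
    have h := hcoer.continuousLinearEquivOfBilin_apply vstar wK
    rw [hvstar, ContinuousLinearEquiv.apply_symm_apply] at h
    rw [← h, Submodule.coe_inner]
  -- extract the solution
  obtain ⟨hv1, hv2⟩ := Submodule.mem_inf.1 vstar.property
  obtain ⟨ustar, hDQstar, h1star, h2star⟩ := SS_spec hb hm hv1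
  have hmeanstar : (∑' x, ustar x * m x) = 0 := by
    have horth := Submodule.mem_orthogonal_singleton_iff_inner_right.1 hv2
    rwa [inner_oneH hm _ h2star] at horth
  -- key identity for mean-zero test functions
  have key : ∀ v : X → ℝ, MemDQ b m v → (∑' x, v x * m x) = 0 →
      energyBil b ustar v = ∑' x, f x * v x * m x := by
    intro v hv hvmean
    have h1v : Memℓp (psiE b v) 2 := (memℓp_psiE_iff hb v).2 hv.2
    have h2v : Memℓp (psiX m v) 2 := (memℓp_psiX_iff hm v).2 hv.1
    have hmemK : Phi b m v h1v h2v ∈ K := by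
      rw [hK, Submodule.mem_inf]
      refine ⟨Phi_mem_SS v h1v h2v, ?_⟩
      rw [Submodule.mem_orthogonal_singleton_iff_inner_right,
        inner_oneH hm _ (Phi_snd v h1v h2v)]
      exact hvmean
    set wvK : K := ⟨Phi b m v h1v h2v, hmemK⟩ with hwvK
    have hc1 : B vstar wvK = energyBil b ustar v := by
      rw [hBapp, hJapp, hJapp]
      have := inner_fst_eq hb (Phi_fst v h1v h2v) h1star
      rw [show ((wvK : HH X)).fst = (Phi b m v h1v h2v).fst from rfl] at *
      rw [this]
      exact (energyBil_comm b v ustar)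
    have hc2 : B vstar wvK = ∑' x, f x * v x * m x := by
      rw [hLM wvK, hproj wvK]
      exact hg_inner _ v (Phi_snd v h1v h2v)
    rw [← hc1, hc2]
  refine ⟨ustar, hmeanstar, hDQstar, fun v hv => ?_⟩
  -- reduce to mean-zero
  set c : ℝ := (∑' x, v x * m x) / (∑' x, m x) with hc
  have hv0 : MemDQ b m (fun x => v x - c) := memDQ_sub_const hb hm hv c
  have hmean0 : (∑' x, (v x - c) * m x) = 0 := by
    have hs : (∑' x, (v x - c) * m x) = (∑' x, v x * m x) - c * ∑' x, m x := by
      rw [show (fun x => (v x - c) * m x) = fun x => v x * m x - c * m x from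
        funext fun x => by ring]
      rw [Summable.tsum_sub (summable_l1 hm hv.1) (hm.summable.mul_left c), tsum_mul_left]
    rw [hs, hc]
    field_simp
    ring
  have hkey := key (fun x => v x - c) hv0 hmean0
  have hL : energyBil b ustar (fun x => v x - c) = energyBil b ustar v := by
    unfold energyBil
    congr 1
    exact tsum_congr fun p => by dsimp only; ring
  have hR : (∑' x, f x * (v x - c) * m x) = ∑' x, f x * v x * m x := by
    rw [show (fun x => f x * (v x - c) * m x) = fun x => f x * v x * m x - c * (f x * m x)
      from funext fun x => by ring]
    rw [Summable.tsum_sub (summable_l1_pair hm hf hv.1) ((summable_l1 hm hf).mul_left c),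
      tsum_mul_left, hf0, mul_zero, sub_zero]
  rw [hL] at hkey
  rw [hkey]
  exact hR

end Aux5

end

/-- the kernel of `L` consists of the constants, and `L` restricted
to the orthogonal complement of the constants is bijective. -/
theorem stmt2 {X : Type*} [Countable X] (b : X → X → ℝ) (m : X → ℝ)
    (hb : IsGraph b) (hconn : GraphConnected b) (hm : FinMeasure m)
    (hcc : CanCompact b m) :
    (∀ u : X → ℝ, IsLap b m u 0 → ∃ a : ℝ, ∀ x, u x = a) ∧
    (∀ f : X → ℝ, MemL2 m f → (∑' x, f x * m x) = 0 →
      ∃! u : X → ℝ, (∑' x, u x * m x) = 0 ∧ IsLap b m u f) := by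
  constructor
  · intro u hu
    obtain ⟨hDQ, -, hQ⟩ := hu
    have h := hQ u hDQ
    have h0 : energyBil b u u = 0 := by
      rw [h, show (fun x => (0 : X → ℝ) x * u x * m x) = fun _ => (0:ℝ) from
        funext fun x => by simp]
      exact tsum_zero
    have hsum : (∑' p : X × X, b p.1 p.2 * (u p.1 - u p.2) ^ 2) = 0 := by
      unfold energyBil at h0
      have h1 : (∑' p : X × X, b p.1 p.2 * (u p.1 - u p.2) * (u p.1 - u p.2)) = 0 := by
        linarith
      rw [show (fun p : X × X => b p.1 p.2 * (u p.1 - u p.2) ^ 2)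
        = fun p : X × X => b p.1 p.2 * (u p.1 - u p.2) * (u p.1 - u p.2) from
        funext fun p => by ring]
      exact h1
    have hconst := const_of_energy_zero hb hconn hDQ.2 hsum
    cases isEmpty_or_nonempty X with
    | inl h' => exact ⟨0, fun x => (IsEmpty.false x).elim⟩
    | inr hne =>
      obtain ⟨x₀⟩ := hne
      exact ⟨u x₀, fun x => hconst x x₀⟩
  · intro f hf hf0
    cases isEmpty_or_nonempty X with
    | inl h' =>
      refine ⟨fun _ => 0, ⟨tsum_empty,
        ⟨Summable.congr summable_zero (fun x => (IsEmpty.false x).elim),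
         Summable.congr summable_zero (fun p => (IsEmpty.false p.1).elim)⟩, hf,
        fun v _ => ?_⟩, fun y _ => ?_⟩
      · unfold energyBil
        rw [tsum_empty, tsum_empty, mul_zero]
      · funext x
        exact (IsEmpty.false x).elim
    | inr hne =>
      obtain ⟨x₀⟩ := hne
      have hsum_pos : 0 < ∑' x, m x :=
        lt_of_lt_of_le (hm.pos x₀) (Summable.le_tsum hm.summable x₀ fun _ _ => (hm.pos _).le)
      obtain ⟨u, hmean, hDQ, hQ⟩ := exists_solution hb hconn hm hcc ⟨x₀⟩ f hf hf0
      refine ⟨u, ⟨hmean, hDQ, hf, hQ⟩, ?_⟩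
      rintro y ⟨hymean, hyDQ, -, hyQ⟩
      have hdDQ : MemDQ b m (fun x => y x - u x) := memDQ_sub hb hm hyDQ hDQ
      have hE1 := hyQ (fun x => y x - u x) hdDQ
      have hE2 := hQ (fun x => y x - u x) hdDQ
      have hEq : (∑' p : X × X, b p.1 p.2 * (y p.1 - y p.2)
            * ((fun x => y x - u x) p.1 - (fun x => y x - u x) p.2))
          = ∑' p : X × X, b p.1 p.2 * (u p.1 - u p.2)
            * ((fun x => y x - u x) p.1 - (fun x => y x - u x) p.2) := by
        have h3 : energyBil b y (fun x => y x - u x)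
            = energyBil b u (fun x => y x - u x) := by rw [hE1, hE2]
        unfold energyBil at h3
        exact mul_left_cancel₀ (by norm_num : (1/2:ℝ) ≠ 0) h3
      have hzero : (∑' p : X × X, b p.1 p.2
          * ((fun x => y x - u x) p.1 - (fun x => y x - u x) p.2) ^ 2) = 0 := by
        have hS1 := summable_pair_mul hb hyDQ.2 hdDQ.2
        have hS2 := summable_pair_mul hb hDQ.2 hdDQ.2
        calc (∑' p : X × X, b p.1 p.2
              * ((fun x => y x - u x) p.1 - (fun x => y x - u x) p.2) ^ 2)
            = ∑' p : X × X, (b p.1 p.2 * (y p.1 - y p.2)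
                * ((fun x => y x - u x) p.1 - (fun x => y x - u x) p.2)
              - b p.1 p.2 * (u p.1 - u p.2)
                * ((fun x => y x - u x) p.1 - (fun x => y x - u x) p.2)) :=
              tsum_congr fun p => by dsimp only; ring
          _ = _ - _ := Summable.tsum_sub hS1 hS2
          _ = 0 := by rw [hEq, sub_self]
      have hconst := const_of_energy_zero hb hconn hdDQ.2 hzero
      have hdmean : (∑' x, (y x - u x) * m x) = 0 := by
        rw [show (fun x => (y x - u x) * m x) = fun x => y x * m x - u x * m x from
          funext fun x => by ring]
        rw [Summable.tsum_sub (summable_l1 hm hyDQ.1) (summable_l1 hm hDQ.1), hymean, hmean, sub_self]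
      have hd0 : y x₀ - u x₀ = 0 := by
        have h1 : (∑' x, (y x - u x) * m x) = (y x₀ - u x₀) * ∑' x, m x := by
          rw [← tsum_mul_left]
          refine tsum_congr fun x => ?_
          rw [show (y x - u x) = (y x₀ - u x₀) from hconst x x₀]
        rw [hdmean] at h1
        rcases mul_eq_zero.1 h1.symm with hh | hh
        · exact hh
        · exact absurd hh hsum_pos.ne'
      funext x
      have hx : y x - u x = y x₀ - u x₀ := hconst x x₀
      rw [hd0] at hx
      linarith
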